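/- Let $f\colon C([0,T],\mathbb R)\to\mathbb R$ be twice continuously Fréchet differentiable with derivatives of polynomial growth. Let $Y_T$ and $\tilde X_T$ be $C([0,T],\mathbb R)$-valued random variables with moments of all orders (in the uniform norm) such that the difference $\tilde X_T-Y_T$ is independent of $Y_T$, has mean zero in $C([0,T],\mathbb R)$, and satisfies $\mathbb E\|\tilde X_T-Y_T\|_\infty^4\leq K\delta^2$ for some constants $K$ and $\delta\in(0,1]$. Then $|\mathbb E(f(Y_T)-f(\tilde X_T))|\leq C\delta$ for a constant $C$ depending on $f$, $K$, and the moments of $Y_T$ and $\tilde X_T$, but not on $\delta$. -/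

import Mathlib

/-!
After enlarging the growth exponent to `q ≥ 1`, the first two derivatives of `f` are bounded by
`B (1 + ‖x‖^q)`. Write `Z = X̃ - Y`. Taylor's formula at `Y` gives `f X̃ - f Y = Df(Y) Z + R` with
`|R| ≤ B (1 + ‖Y‖^q + ‖X̃‖^q) ‖Z‖²`. The linear term has mean zero: under the product law of the
independent pair `(Y, Z)`, integrating first in `Z` gives `Df(y) (E Z) = 0`. For the remainder,
the weighted AM-GM inequality `ab ≤ (δ a² + b² / δ) / 2` gives
`E|R| ≤ (δ E[B² (1 + ‖Y‖^q + ‖X̃‖^q)²] + E‖Z‖⁴ / δ) / 2`, which is `O(δ)` since `E‖Z‖⁴ ≤ K δ²`.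
-/

open MeasureTheory Set ProbabilityTheory

/-- The path space `C([0,T],ℝ)` with the uniform norm. -/
abbrev PathC (T : ℝ) := C(↥(Set.Icc (0 : ℝ) T), ℝ)

section Growth

variable {E : Type*} [SeminormedAddCommGroup E]

-- With a negative exponent the growth bound blows up at `0`, where continuity takes over.
lemma bddAbove_range_of_le_mul_one_add_rpow_of_neg {g : E → ℝ} (hg : Continuous g) {c q : ℝ}
    (hq : q < 0) (hb : ∀ x, g x ≤ c * (1 + ‖x‖ ^ q)) : BddAbove (range g) := by
  obtain ⟨ε, hε, hnear⟩ := Metric.eventually_nhds_iff.1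
    ((hg.tendsto 0).eventually (gt_mem_nhds (lt_add_one (g 0))))
  refine ⟨max (g 0 + 1) (max c 0 * (1 + ε ^ q)), forall_mem_range.2 fun x => ?_⟩
  rcases lt_or_ge ‖x‖ ε with hx | hx
  · exact le_max_of_le_left (hnear (by simpa using hx)).le
  · have hxq : ‖x‖ ^ q ≤ ε ^ q := Real.rpow_le_rpow_of_nonpos hε hx hq.le
    calc g x ≤ c * (1 + ‖x‖ ^ q) := hb x
      _ ≤ max c 0 * (1 + ‖x‖ ^ q) := by gcongr; exact le_max_left c 0
      _ ≤ max c 0 * (1 + ε ^ q) := by gcongr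
      _ ≤ _ := le_max_right _ _

lemma exists_le_mul_one_add_rpow_max_one {g : E → ℝ} (hg : Continuous g) {c q : ℝ}
    (hb : ∀ x, g x ≤ c * (1 + ‖x‖ ^ q)) :
    ∃ B, 0 ≤ B ∧ ∀ x, g x ≤ B * (1 + ‖x‖ ^ max q 1) := by
  have h_one_le : ∀ x : E, 1 ≤ 1 + ‖x‖ ^ max q 1 := fun x =>
    le_add_of_nonneg_right (by positivity)
  rcases lt_or_ge q 0 with hq | hq
  · obtain ⟨D, hD⟩ := bddAbove_range_of_le_mul_one_add_rpow_of_neg hg hq hb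
    refine ⟨max D 0, le_max_right _ _, fun x => ?_⟩
    calc g x ≤ max D 0 := (hD (mem_range_self x)).trans (le_max_left _ _)
      _ ≤ max D 0 * (1 + ‖x‖ ^ max q 1) := le_mul_of_one_le_right (le_max_right _ _) (h_one_le x)
  · refine ⟨2 * max c 0, by positivity, fun x => ?_⟩
    have hxq : ‖x‖ ^ q ≤ 1 + ‖x‖ ^ max q 1 := by
      rcases le_total ‖x‖ 1 with h | h
      · linarith [Real.rpow_le_one (norm_nonneg x) h hq, h_one_le x]
      · linarith [Real.rpow_le_rpow_of_exponent_le h (le_max_left q 1)]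
    calc g x ≤ c * (1 + ‖x‖ ^ q) := hb x
      _ ≤ max c 0 * (1 + ‖x‖ ^ q) := by gcongr; exact le_max_left c 0
      _ ≤ max c 0 * (2 * (1 + ‖x‖ ^ max q 1)) := by gcongr; linarith [h_one_le x]
      _ = 2 * max c 0 * (1 + ‖x‖ ^ max q 1) := by ring

end Growth

section Taylor

variable {E F : Type*} [NormedAddCommGroup E] [NormedSpace ℝ E]
  [NormedAddCommGroup F] [NormedSpace ℝ F]

lemma norm_image_sub_sub_fderiv_le {f : E → F} (hf : ContDiff ℝ 2 f) {x y : E} {M : ℝ}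
    (hM : ∀ z ∈ segment ℝ x y, ‖iteratedFDeriv ℝ 2 f z‖ ≤ M) :
    ‖f y - f x - fderiv ℝ f x (y - x)‖ ≤ M * ‖y - x‖ ^ 2 := by
  have hM₀ : 0 ≤ M := (norm_nonneg _).trans (hM x (left_mem_segment ℝ x y))
  have hf' : ContDiff ℝ 1 (fderiv ℝ f) := hf.fderiv_right (by norm_num)
  have hDf : ∀ z ∈ segment ℝ x y, ‖fderiv ℝ f z - fderiv ℝ f x‖ ≤ M * ‖y - x‖ := by
    intro z hz
    calc ‖fderiv ℝ f z - fderiv ℝ f x‖ ≤ M * ‖z - x‖ :=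
          (convex_segment x y).norm_image_sub_le_of_norm_fderiv_le
            (fun w _ => hf'.differentiable one_ne_zero w)
            (fun w hw => by
              rw [← norm_iteratedFDeriv_one, norm_iteratedFDeriv_fderiv]
              exact hM w hw)
            (left_mem_segment ℝ x y) hz
      _ ≤ M * ‖y - x‖ := by gcongr; exact norm_sub_le_of_mem_segment hz
  calc ‖f y - f x - fderiv ℝ f x (y - x)‖ ≤ M * ‖y - x‖ * ‖y - x‖ :=
        (convex_segment x y).norm_image_sub_le_of_norm_fderiv_le'
          (fun w _ => hf.differentiable (by norm_num) w) hDf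
          (left_mem_segment ℝ x y) (right_mem_segment ℝ x y)
    _ = M * ‖y - x‖ ^ 2 := by ring

lemma norm_image_sub_sub_fderiv_le_of_growth {f : E → F} (hf : ContDiff ℝ 2 f) {B q : ℝ}
    (hB : 0 ≤ B) (hq : 0 ≤ q) (hf₂ : ∀ x, ‖iteratedFDeriv ℝ 2 f x‖ ≤ B * (1 + ‖x‖ ^ q))
    (x y : E) :
    ‖f y - f x - fderiv ℝ f x (y - x)‖ ≤ B * (1 + ‖x‖ ^ q + ‖y‖ ^ q) * ‖y - x‖ ^ 2 := by
  refine norm_image_sub_sub_fderiv_le hf fun z hz => (hf₂ z).trans ?_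
  have hz_le : ‖z‖ ≤ max ‖x‖ ‖y‖ := by
    simpa using (convex_closedBall (0 : E) (max ‖x‖ ‖y‖)).segment_subset
      (by simp) (by simp) hz
  have hzq : ‖z‖ ^ q ≤ ‖x‖ ^ q + ‖y‖ ^ q := by
    refine (Real.rpow_le_rpow (norm_nonneg z) hz_le hq).trans ?_
    rcases le_total ‖x‖ ‖y‖ with h | h <;> simp only [h, max_eq_left, max_eq_right] <;>
      linarith [Real.rpow_nonneg (norm_nonneg x) q, Real.rpow_nonneg (norm_nonneg y) q]
  rw [add_assoc]
  gcongr

lemma norm_fderiv_apply_sub_le_of_growth {f : E → F} {B q : ℝ} (hB : 0 ≤ B)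
    (hf₁ : ∀ x, ‖fderiv ℝ f x‖ ≤ B * (1 + ‖x‖ ^ q)) (x y : E) :
    ‖fderiv ℝ f x (y - x)‖ ≤ B * (1 + ‖x‖ ^ q + ‖y‖ ^ q) * ‖y - x‖ := by
  refine ((fderiv ℝ f x).le_opNorm (y - x)).trans (mul_le_mul_of_nonneg_right ?_ (norm_nonneg _))
  exact (hf₁ x).trans (mul_le_mul_of_nonneg_left (le_add_of_nonneg_right (by positivity)) hB)

end Taylor

lemma mul_le_add_sq_div {δ : ℝ} (hδ : 0 < δ) (a b : ℝ) :
    a * b ≤ (δ * a ^ 2 + b ^ 2 / δ) / 2 := by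
  rw [le_div_iff₀ two_pos, ← sub_nonneg]
  have : δ * a ^ 2 + b ^ 2 / δ - a * b * 2 = (δ * a - b) ^ 2 / δ := by field_simp; ring
  rw [this]
  positivity

section Integral

variable {Ω : Type*} [MeasurableSpace Ω] {μ : Measure Ω}

lemma integrable_of_abs_le_mul {g u v U V : Ω → ℝ} (hg : AEStronglyMeasurable g μ)
    (hU : Integrable U μ) (hV : Integrable V μ) (hu : ∀ ω, u ω ^ 2 ≤ U ω)
    (hv : ∀ ω, v ω ^ 2 ≤ V ω) (h : ∀ ω, |g ω| ≤ u ω * v ω) : Integrable g μ :=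
  ((hU.add hV).div_const 2).mono' hg <| ae_of_all _ fun ω => by
    have := mul_le_add_sq_div one_pos (u ω) (v ω)
    simp only [Real.norm_eq_abs, Pi.add_apply]
    linarith [h ω, hu ω, hv ω]

lemma integral_abs_le_of_abs_le_mul {g u v U V : Ω → ℝ} (hg : AEStronglyMeasurable g μ)
    (hU : Integrable U μ) (hV : Integrable V μ) (hu : ∀ ω, u ω ^ 2 ≤ U ω)
    (hv : ∀ ω, v ω ^ 2 ≤ V ω) (h : ∀ ω, |g ω| ≤ u ω * v ω) {δ : ℝ} (hδ : 0 < δ) :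
    ∫ ω, |g ω| ∂μ ≤ (δ * ∫ ω, U ω ∂μ + (∫ ω, V ω ∂μ) / δ) / 2 := by
  calc ∫ ω, |g ω| ∂μ ≤ ∫ ω, (δ * U ω + V ω / δ) / 2 ∂μ := by
        refine integral_mono (integrable_of_abs_le_mul hg hU hV hu hv h).abs
          (((hU.const_mul δ).add (hV.div_const δ)).div_const 2) fun ω => ?_
        have := mul_le_add_sq_div hδ (u ω) (v ω)
        have := mul_le_mul_of_nonneg_left (hu ω) hδ.le
        have := div_le_div_of_nonneg_right (hv ω) hδ.le
        linarith [h ω]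
    _ = (δ * ∫ ω, U ω ∂μ + (∫ ω, V ω ∂μ) / δ) / 2 := by
        rw [integral_div, integral_add (hU.const_mul δ) (hV.div_const δ), integral_const_mul,
          integral_div]

variable {E F : Type*} [NormedAddCommGroup E] [NormedSpace ℝ E] [CompleteSpace E]
  [MeasurableSpace E] [BorelSpace E] [SecondCountableTopology E]
  [NormedAddCommGroup F] [NormedSpace ℝ F] [CompleteSpace F]

theorem integral_apply_eq_zero_of_indepFun [IsFiniteMeasure μ] {A : E → E →L[ℝ] F}
    (hA : Continuous A) {Y Z : Ω → E} (hY : Measurable Y) (hZ : Measurable Z)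
    (hind : IndepFun Z Y μ) (hZ_int : Integrable Z μ) (hZ_mean : ∫ ω, Z ω ∂μ = 0)
    (hint : Integrable (fun ω => A (Y ω) (Z ω)) μ) : ∫ ω, A (Y ω) (Z ω) ∂μ = 0 := by
  have hpair : AEMeasurable (fun ω => (Y ω, Z ω)) μ := (hY.prodMk hZ).aemeasurable
  have hmap : μ.map (fun ω => (Y ω, Z ω)) = (μ.map Y).prod (μ.map Z) :=
    (indepFun_iff_map_prod_eq_prod_map_map hY.aemeasurable hZ.aemeasurable).1 hind.symm
  have hφ : AEStronglyMeasurable (fun p : E × E => A p.1 p.2) (μ.map fun ω => (Y ω, Z ω)) :=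
    ((hA.comp continuous_fst).clm_apply continuous_snd).aestronglyMeasurable
  have hZ_int' : Integrable (fun z => z) (μ.map Z) :=
    (integrable_map_measure aestronglyMeasurable_id hZ.aemeasurable).2 hZ_int
  have h_inner : ∀ y, ∫ z, A y z ∂(μ.map Z) = 0 := fun y => by
    rw [(A y).integral_comp_comm hZ_int',
      integral_map (f := fun z => z) hZ.aemeasurable aestronglyMeasurable_id]
    simp [hZ_mean]
  rw [← integral_map hpair hφ, hmap, integral_prod]
  · simp [h_inner]
  · rwa [← hmap, integrable_map_measure hφ hpair]

end Integral

lemma sq_mul_one_add_rpow_add_rpow_le {a b B q : ℝ} (ha : 0 ≤ a) (hb : 0 ≤ b) :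
    (B * (1 + a ^ q + b ^ q)) ^ 2 ≤ 3 * B ^ 2 * (1 + a ^ (2 * q) + b ^ (2 * q)) := by
  have hsq : ∀ x : ℝ, 0 ≤ x → x ^ (2 * q) = (x ^ q) ^ 2 := fun x hx => by
    rw [mul_comm, ← Real.rpow_mul_natCast hx]; norm_num
  have h : (1 + a ^ q + b ^ q) ^ 2 ≤ 3 * (1 + (a ^ q) ^ 2 + (b ^ q) ^ 2) := by
    nlinarith [sq_nonneg (1 - a ^ q), sq_nonneg (1 - b ^ q), sq_nonneg (a ^ q - b ^ q)]
  rw [hsq a ha, hsq b hb, mul_pow, mul_comm 3, mul_assoc]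
  exact mul_le_mul_of_nonneg_left h (sq_nonneg B)

section WeakError

variable {Ω E : Type*} [MeasurableSpace Ω] {μ : Measure Ω} [IsProbabilityMeasure μ]
  [NormedAddCommGroup E] [NormedSpace ℝ E] [CompleteSpace E]
  [MeasurableSpace E] [BorelSpace E] [SecondCountableTopology E]

theorem abs_integral_sub_le_of_indepFun {f : E → ℝ} (hf : ContDiff ℝ 2 f) {B q : ℝ}
    (hB : 0 ≤ B) (hq : 0 ≤ q) (hf₁ : ∀ x, ‖fderiv ℝ f x‖ ≤ B * (1 + ‖x‖ ^ q))
    (hf₂ : ∀ x, ‖iteratedFDeriv ℝ 2 f x‖ ≤ B * (1 + ‖x‖ ^ q))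
    {Y X : Ω → E} (hY : Measurable Y) (hX : Measurable X)
    (hYq : Integrable (fun ω => ‖Y ω‖ ^ (2 * q)) μ)
    (hXq : Integrable (fun ω => ‖X ω‖ ^ (2 * q)) μ)
    (hZ : MemLp (fun ω => X ω - Y ω) 4 μ) (hind : IndepFun (fun ω => X ω - Y ω) Y μ)
    (hmean : ∫ ω, (X ω - Y ω) ∂μ = 0) {δ : ℝ} (hδ : 0 < δ) :
    |∫ ω, (f (Y ω) - f (X ω)) ∂μ| ≤
      (δ * (3 * B ^ 2 * (1 + ∫ ω, ‖Y ω‖ ^ (2 * q) ∂μ + ∫ ω, ‖X ω‖ ^ (2 * q) ∂μ)) +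
        (∫ ω, ‖X ω - Y ω‖ ^ 4 ∂μ) / δ) / 2 := by
  set Z := fun ω => X ω - Y ω
  set L := fun ω => fderiv ℝ f (Y ω) (Z ω)
  set R := fun ω => f (X ω) - f (Y ω) - L ω
  set u := fun ω => B * (1 + ‖Y ω‖ ^ q + ‖X ω‖ ^ q)
  set U := fun ω => 3 * B ^ 2 * (1 + ‖Y ω‖ ^ (2 * q) + ‖X ω‖ ^ (2 * q))
  have hYq' : Integrable (fun ω => 1 + ‖Y ω‖ ^ (2 * q)) μ := (integrable_const 1).add hYq
  have hU : Integrable U μ := (hYq'.add hXq).const_mul _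
  have hu (ω : Ω) : u ω ^ 2 ≤ U ω :=
    sq_mul_one_add_rpow_add_rpow_le (norm_nonneg _) (norm_nonneg _)
  have hDf : Continuous (fderiv ℝ f) := hf.continuous_fderiv (by norm_num)
  have hL_meas : AEStronglyMeasurable L μ :=
    Continuous.comp_aestronglyMeasurable₂ (g := fun y z => fderiv ℝ f y z)
      ((hDf.comp continuous_fst).clm_apply continuous_snd)
      hY.aestronglyMeasurable (hX.sub hY).aestronglyMeasurable
  have hR_meas : AEStronglyMeasurable R μ :=
    ((hf.continuous.comp_aestronglyMeasurable hX.aestronglyMeasurable).sub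
      (hf.continuous.comp_aestronglyMeasurable hY.aestronglyMeasurable)).sub hL_meas
  have hL (ω : Ω) : |L ω| ≤ u ω * ‖Z ω‖ :=
    norm_fderiv_apply_sub_le_of_growth hB hf₁ (Y ω) (X ω)
  have hR (ω : Ω) : |R ω| ≤ u ω * ‖Z ω‖ ^ 2 := by
    simpa only [Real.norm_eq_abs] using
      norm_image_sub_sub_fderiv_le_of_growth hf hB hq hf₂ (Y ω) (X ω)
  have hL_int : Integrable L μ :=
    integrable_of_abs_le_mul hL_meas hU
      (hZ.mono_exponent (by norm_num : (2 : ENNReal) ≤ 4)).integrable_norm_pow' hu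
      (fun _ => le_rfl) hL
  have hR_int : Integrable R μ :=
    integrable_of_abs_le_mul hR_meas hU hZ.integrable_norm_pow' hu (fun _ => by rw [← pow_mul]) hR
  have hL_zero : ∫ ω, L ω ∂μ = 0 :=
    integral_apply_eq_zero_of_indepFun hDf hY (hX.sub hY) hind (hZ.integrable (by norm_num))
      hmean hL_int
  have hsplit : (fun ω => f (Y ω) - f (X ω)) = fun ω => -(R ω + L ω) := by
    funext ω; simp only [R]; ring
  calc |∫ ω, (f (Y ω) - f (X ω)) ∂μ| = |∫ ω, R ω ∂μ| := by
        rw [hsplit, integral_neg, integral_add hR_int hL_int, hL_zero, add_zero, abs_neg]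
    _ ≤ ∫ ω, |R ω| ∂μ := abs_integral_le_integral_abs
    _ ≤ (δ * ∫ ω, U ω ∂μ + (∫ ω, ‖Z ω‖ ^ 4 ∂μ) / δ) / 2 :=
        integral_abs_le_of_abs_le_mul hR_meas hU hZ.integrable_norm_pow' hu
          (fun _ => by rw [← pow_mul]) hR hδ
    _ = _ := by
        rw [integral_const_mul, integral_add hYq' hXq, integral_add (integrable_const 1) hYq]
        simp [Z]

end WeakError

theorem stmt12_general (T : ℝ)
    {Ω : Type*} [MeasurableSpace Ω] (μ : Measure Ω) [IsProbabilityMeasure μ]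
    [MeasurableSpace (PathC T)] [BorelSpace (PathC T)]
    (f : PathC T → ℝ) (hf : ContDiff ℝ 2 f)
    (Cf qf : ℝ)
    (hgrowth : ∀ i : ℕ, i ≤ 2 → ∀ x : PathC T,
      ‖iteratedFDeriv ℝ i f x‖ ≤ Cf * (1 + ‖x‖ ^ qf))
    (K : ℝ) (Mo : ℝ → ℝ) :
    ∃ C : ℝ, ∀ δ : ℝ, δ ∈ Set.Ioc (0 : ℝ) 1 →
      ∀ Y Xt : Ω → PathC T, Measurable Y → Measurable Xt →
      (∀ p : ℝ, 1 ≤ p → Integrable (fun ω => ‖Y ω‖ ^ p) μ ∧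
        Integrable (fun ω => ‖Xt ω‖ ^ p) μ) →
      (∀ p : ℝ, 1 ≤ p → (∫ ω, ‖Y ω‖ ^ p ∂μ) ≤ Mo p ∧ (∫ ω, ‖Xt ω‖ ^ p ∂μ) ≤ Mo p) →
      IndepFun (fun ω => Xt ω - Y ω) Y μ →
      (∫ ω, (Xt ω - Y ω) ∂μ) = 0 →
      (∫ ω, ‖Xt ω - Y ω‖ ^ (4 : ℝ) ∂μ) ≤ K * δ ^ 2 →
      |∫ ω, (f (Y ω) - f (Xt ω)) ∂μ| ≤ C * δ := by
  have hgrowth₁₂ (x : PathC T) :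
      ‖fderiv ℝ f x‖ + ‖iteratedFDeriv ℝ 2 f x‖ ≤ 2 * Cf * (1 + ‖x‖ ^ qf) := by
    have h₁ := hgrowth 1 (by norm_num) x
    rw [norm_iteratedFDeriv_one] at h₁
    linarith [hgrowth 2 le_rfl x]
  obtain ⟨B, hB, hbound⟩ := exists_le_mul_one_add_rpow_max_one
    (g := fun x => ‖fderiv ℝ f x‖ + ‖iteratedFDeriv ℝ 2 f x‖)
    ((hf.continuous_fderiv (by norm_num)).norm.add (hf.continuous_iteratedFDeriv le_rfl).norm)
    hgrowth₁₂
  set q := max qf 1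
  have h2q : 1 ≤ 2 * q := by linarith [le_max_right qf 1]
  refine ⟨(3 * B ^ 2 * (1 + 2 * Mo (2 * q)) + K) / 2, ?_⟩
  rintro δ ⟨hδ, -⟩ Y Xt hY hXt hInt hMo hind hmean hK
  have hL4 {V : Ω → PathC T} (hV : Measurable V) (h : Integrable (fun ω => ‖V ω‖ ^ (4 : ℝ)) μ) :
      MemLp V 4 μ :=
    (integrable_norm_rpow_iff hV.aestronglyMeasurable (by norm_num) (by norm_num)).1
      (by simpa using h)
  have hK' : ∫ ω, ‖Xt ω - Y ω‖ ^ 4 ∂μ ≤ K * δ ^ 2 := by simpa using hK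
  calc |∫ ω, (f (Y ω) - f (Xt ω)) ∂μ|
      ≤ (δ * (3 * B ^ 2 * (1 + ∫ ω, ‖Y ω‖ ^ (2 * q) ∂μ + ∫ ω, ‖Xt ω‖ ^ (2 * q) ∂μ)) +
          (∫ ω, ‖Xt ω - Y ω‖ ^ 4 ∂μ) / δ) / 2 :=
        abs_integral_sub_le_of_indepFun hf hB (by positivity)
          (fun x => by linarith [hbound x, norm_nonneg (iteratedFDeriv ℝ 2 f x)])
          (fun x => by linarith [hbound x, norm_nonneg (fderiv ℝ f x)]) hY hXt
          (hInt _ h2q).1 (hInt _ h2q).2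
          ((hL4 hXt (hInt 4 (by norm_num)).2).sub (hL4 hY (hInt 4 (by norm_num)).1))
          hind hmean hδ
    _ ≤ (δ * (3 * B ^ 2 * (1 + Mo (2 * q) + Mo (2 * q))) + K * δ ^ 2 / δ) / 2 := by
        gcongr
        exacts [(hMo _ h2q).1, (hMo _ h2q).2]
    _ = (3 * B ^ 2 * (1 + 2 * Mo (2 * q)) + K) / 2 * δ := by
        field_simp
        ring

/-- Weak error bound via second-order Taylor expansion: if `f ∈ C²_p(C([0,T],ℝ),ℝ)` and
`X̃_T - Y_T` is independent of `Y_T`, centered, with `E‖X̃_T-Y_T‖⁴_∞ ≤ K δ²`, and both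
variables have all moments bounded by `Mo`, then `|E(f(Y_T)-f(X̃_T))| ≤ C δ` with `C`
depending only on `f`, `K` and `Mo` (not on `δ`). -/
theorem stmt12 (T : ℝ) (hT : 0 < T)
    {Ω : Type*} [MeasurableSpace Ω] (μ : Measure Ω) [IsProbabilityMeasure μ]
    [MeasurableSpace (PathC T)] [BorelSpace (PathC T)]
    (f : PathC T → ℝ) (hf : ContDiff ℝ 2 f)
    (Cf qf : ℝ)
    (hgrowth : ∀ i : ℕ, i ≤ 2 → ∀ x : PathC T,
      ‖iteratedFDeriv ℝ i f x‖ ≤ Cf * (1 + ‖x‖ ^ qf))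
    (K : ℝ) (Mo : ℝ → ℝ) :
    ∃ C : ℝ, ∀ δ : ℝ, δ ∈ Set.Ioc (0 : ℝ) 1 →
      ∀ Y Xt : Ω → PathC T, Measurable Y → Measurable Xt →
      (∀ p : ℝ, 1 ≤ p → Integrable (fun ω => ‖Y ω‖ ^ p) μ ∧
        Integrable (fun ω => ‖Xt ω‖ ^ p) μ) →
      (∀ p : ℝ, 1 ≤ p → (∫ ω, ‖Y ω‖ ^ p ∂μ) ≤ Mo p ∧ (∫ ω, ‖Xt ω‖ ^ p ∂μ) ≤ Mo p) →
      IndepFun (fun ω => Xt ω - Y ω) Y μ →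
      (∫ ω, (Xt ω - Y ω) ∂μ) = 0 →
      (∫ ω, ‖Xt ω - Y ω‖ ^ (4 : ℝ) ∂μ) ≤ K * δ ^ 2 →
      |∫ ω, (f (Y ω) - f (Xt ω)) ∂μ| ≤ C * δ :=
  stmt12_general T μ f hf Cf qf hgrowth K Mo
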